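/- arXiv:1707.09581 — 2 statements merged into one kernel-verified Lean document; each statement's English description precedes it below -/
import Mathlib

section
/- Let P ≥ 1 be an integer, D = P² + 4, λ₁ = (P + √D)/2, λ₂ = (P − √D)/2, and define h : ℝ → ℂ by h(t) = ((λ₁ : ℂ)^t − (λ₂ : ℂ)^t)/√D, where z^t denotes the principal complex power exp(t · Log z). Then for every real t, h(t−1)·h(t+1) − h(t)² = (−1 : ℂ)^t, where (−1 : ℂ)^t = exp(iπt); in particular this curve is a helix of ratio 1 and pitch 2 (the P-Fibonacci helix). -/
/-!
The roots satisfy `λ₁ λ₂ = -1` and `λ₁ - λ₂ = √D`. For any nonzero `a ≠ b`, the Binet-type function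
`F z = (a^z - b^z)/(a - b)` satisfies the Cassini identity `F(z-1) F(z+1) - F(z)² = -(a^z b^z)/(ab)`,
because the shifts `a^(z±1) = a^z a^(±1)` hold for complex powers. Since `λ₁ > 0`, the principal
power is multiplicative, `λ₁^t λ₂^t = (λ₁λ₂)^t = (-1)^t`, so the right-hand side is `(-1)^t`.
-/

namespace Complex

open Real

theorem ofReal_mul_cpow_of_pos {r : ℝ} (hr : 0 < r) {x : ℂ} (hx : x ≠ 0) (z : ℂ) :
    ((r : ℂ) * x) ^ z = (r : ℂ) ^ z * x ^ z := by
  have hr' : (r : ℂ) ≠ 0 := ofReal_ne_zero.mpr hr.ne'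
  rw [cpow_def_of_ne_zero (mul_ne_zero hr' hx), log_ofReal_mul hr hx, ofReal_log hr.le,
    add_mul, exp_add, ← cpow_def_of_ne_zero hr', ← cpow_def_of_ne_zero hx]

theorem neg_one_cpow (z : ℂ) : (-1 : ℂ) ^ z = exp (π * z * I) := by
  rw [cpow_def_of_ne_zero (neg_ne_zero.mpr one_ne_zero), log_neg_one]
  ring_nf

theorem cpow_sub_one_mul_cpow_add_one_sub_sq {a b : ℂ} (ha : a ≠ 0) (hb : b ≠ 0)
    (hab : a ≠ b) (z : ℂ) :
    (a ^ (z - 1) - b ^ (z - 1)) / (a - b) * ((a ^ (z + 1) - b ^ (z + 1)) / (a - b))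
      - ((a ^ z - b ^ z) / (a - b)) ^ 2 = -(a ^ z * b ^ z) / (a * b) := by
  have hab' : a - b ≠ 0 := sub_ne_zero.mpr hab
  rw [cpow_sub _ _ ha, cpow_sub _ _ hb, cpow_add _ _ ha, cpow_add _ _ hb, cpow_one, cpow_one]
  field_simp
  ring

end Complex

theorem fibonacci_roots_mul (P : ℝ) :
    (P + √(P ^ 2 + 4)) / 2 * ((P - √(P ^ 2 + 4)) / 2) = -1 := by
  have hs : √(P ^ 2 + 4) ^ 2 = P ^ 2 + 4 := Real.sq_sqrt (by positivity)
  linear_combination -hs / 4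

theorem fibonacci_root_pos (P : ℝ) : 0 < (P + √(P ^ 2 + 4)) / 2 := by
  have hlt : |P| < √(P ^ 2 + 4) := by
    rw [← Real.sqrt_sq_eq_abs]
    exact Real.sqrt_lt_sqrt (sq_nonneg P) (by linarith)
  linarith [neg_abs_le P]

theorem fibonacci_helix_general (P : ℤ) (D : ℝ) (hD : D = (P : ℝ) ^ 2 + 4)
    (lam1 lam2 : ℝ) (hlam1 : lam1 = ((P : ℝ) + Real.sqrt D) / 2)
    (hlam2 : lam2 = ((P : ℝ) - Real.sqrt D) / 2)
    (h : ℝ → ℂ)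
    (hh : ∀ t : ℝ, h t = ((lam1 : ℂ) ^ (t : ℂ) - (lam2 : ℂ) ^ (t : ℂ)) / (Real.sqrt D : ℂ)) :
    ∀ t : ℝ, h (t - 1) * h (t + 1) - h t ^ 2 = (-1 : ℂ) ^ (t : ℂ) ∧
      (-1 : ℂ) ^ (t : ℂ) = Complex.exp (Real.pi * t * Complex.I) := by
  intro t
  have hpos : 0 < lam1 := hlam1 ▸ hD ▸ fibonacci_root_pos P
  have hprod : lam1 * lam2 = -1 := hlam1 ▸ hlam2 ▸ hD ▸ fibonacci_roots_mul P
  have hneg : lam2 < 0 := by nlinarith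
  have hsqrt : (Real.sqrt D : ℂ) = lam1 - lam2 := by rw [hlam1, hlam2]; push_cast; ring
  have hprodC : (lam1 : ℂ) * lam2 = -1 := by exact_mod_cast hprod
  refine ⟨?_, Complex.neg_one_cpow t⟩
  simp only [hh, hsqrt]
  push_cast
  rw [Complex.cpow_sub_one_mul_cpow_add_one_sub_sq (by exact_mod_cast hpos.ne')
    (by exact_mod_cast hneg.ne) (by exact_mod_cast (hneg.trans hpos).ne'), hprodC,
    ← Complex.ofReal_mul_cpow_of_pos hpos (by exact_mod_cast hneg.ne), hprodC]
  ring

/-- The P-Fibonacci helix: `h(t−1)·h(t+1) − h(t)² = (−1)^t`, where `(−1 : ℂ)^t = exp(iπt)`,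
so this curve is a helix of ratio 1 and pitch 2. -/
theorem fibonacci_helix (P : ℤ) (hP : 1 ≤ P) (D : ℝ) (hD : D = (P : ℝ) ^ 2 + 4)
    (lam1 lam2 : ℝ) (hlam1 : lam1 = ((P : ℝ) + Real.sqrt D) / 2)
    (hlam2 : lam2 = ((P : ℝ) - Real.sqrt D) / 2)
    (h : ℝ → ℂ)
    (hh : ∀ t : ℝ, h t = ((lam1 : ℂ) ^ (t : ℂ) - (lam2 : ℂ) ^ (t : ℂ)) / (Real.sqrt D : ℂ)) :
    ∀ t : ℝ, h (t - 1) * h (t + 1) - h t ^ 2 = (-1 : ℂ) ^ (t : ℂ) ∧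
      (-1 : ℂ) ^ (t : ℂ) = Complex.exp (Real.pi * t * Complex.I) :=
  fibonacci_helix_general P D hD lam1 lam2 hlam1 hlam2 h hh
end

section
/- Let P ≥ 1 be an integer, D = P² + 4, λ₁ = (P + √D)/2, λ₂ = (P − √D)/2, and define g(t) = (λ₁ : ℂ)^t + (λ₂ : ℂ)^t and h(t) = ((λ₁ : ℂ)^t − (λ₂ : ℂ)^t)/√D using principal complex powers. Then for every real t, g(t)² − g(t−1)·g(t+1) − (P² + 3)·(h(t−1)·h(t+1) − h(t)²) = (−1 : ℂ)^t, where (−1 : ℂ)^t = exp(iπt); in particular this map is representable as a helix of ratio 1 and pitch 2. -/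
/-!
Write `A = λ₁ᵗ` and `B = λ₂ᵗ`. Since `λ₁ ≠ 0 ≠ λ₂`, the principal powers at `t ± 1` are `A λ₁^{±1}` and
`B λ₂^{±1}`, and `λ₁ λ₂ = -1` turns both Cassini-type expressions into `A B` times
`(λ₁ - λ₂)² = P² + 4`, so the combination in the theorem collapses to `A B`. Because `λ₁ > 0`, the
principal power is multiplicative in the base, whence `A B = (λ₁ λ₂)ᵗ = (-1)ᵗ`.
-/

section Cassini

variable {K : Type*} [Field K] {x y : K}

theorem inv_eq_neg_of_mul_eq_neg_one (hxy : x * y = -1) : x⁻¹ = -y :=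
  inv_eq_of_mul_eq_one_right (by linear_combination -hxy)

theorem lucas_cassini (hxy : x * y = -1) (A B : K) :
    (A + B) ^ 2 - (A * x⁻¹ + B * y⁻¹) * (A * x + B * y) = A * B * (x - y) ^ 2 := by
  rw [inv_eq_neg_of_mul_eq_neg_one hxy, inv_eq_neg_of_mul_eq_neg_one (mul_comm x y ▸ hxy)]
  linear_combination (A + B) ^ 2 * hxy

theorem fibonacci_cassini (hxy : x * y = -1) (A B : K) :
    (A * x⁻¹ - B * y⁻¹) * (A * x - B * y) - (A - B) ^ 2 = A * B * (x - y) ^ 2 := by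
  rw [inv_eq_neg_of_mul_eq_neg_one hxy, inv_eq_neg_of_mul_eq_neg_one (mul_comm x y ▸ hxy)]
  linear_combination -(A - B) ^ 2 * hxy

theorem cassini_helix_identity {P s : K} (hxy : x * y = -1) (hsum : x + y = P)
    (hs : s ^ 2 = P ^ 2 + 4) (hs0 : s ≠ 0) (A B : K) :
    (A + B) ^ 2 - (A * x⁻¹ + B * y⁻¹) * (A * x + B * y)
        - (P ^ 2 + 3) * ((A * x⁻¹ - B * y⁻¹) / s * ((A * x - B * y) / s) - ((A - B) / s) ^ 2) =
      A * B := by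
  have hdiff : (x - y) ^ 2 = s ^ 2 := by linear_combination (x + y + P) * hsum - 4 * hxy - hs
  have hfib := fibonacci_cassini hxy A B
  rw [lucas_cassini hxy, div_mul_div_comm, ← sq, div_pow, ← sub_div, hfib, hdiff,
    mul_div_cancel_right₀ _ (pow_ne_zero 2 hs0), hs]
  ring

end Cassini

namespace Complex

theorem cpow_add_one {x : ℂ} (hx : x ≠ 0) (s : ℂ) : x ^ (s + 1) = x ^ s * x := by
  rw [cpow_add _ _ hx, cpow_one]

theorem cpow_sub_one {x : ℂ} (hx : x ≠ 0) (s : ℂ) : x ^ (s - 1) = x ^ s * x⁻¹ := by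
  rw [sub_eq_add_neg, cpow_add _ _ hx, cpow_neg_one]

theorem ofReal_mul_cpow_of_pos_s18 {a : ℝ} (ha : 0 < a) (x s : ℂ) :
    ((a : ℂ) * x) ^ s = (a : ℂ) ^ s * x ^ s := by
  have ha' : (a : ℂ) ≠ 0 := ofReal_ne_zero.mpr ha.ne'
  rcases eq_or_ne x 0 with rfl | hx
  · rcases eq_or_ne s 0 with rfl | hs <;> simp [*]
  rw [cpow_def_of_ne_zero (mul_ne_zero ha' hx), log_ofReal_mul ha hx, ofReal_log ha.le,
    add_mul, exp_add, ← cpow_def_of_ne_zero ha', ← cpow_def_of_ne_zero hx]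

theorem neg_one_cpow_eq_exp (s : ℂ) : (-1 : ℂ) ^ s = exp (Real.pi * s * I) := by
  rw [cpow_def_of_ne_zero (neg_ne_zero.mpr one_ne_zero), log_neg_one]
  ring_nf

end Complex

open Complex in
theorem psi4_helix_general (P : ℤ) (D : ℝ) (hD : D = (P : ℝ) ^ 2 + 4)
    (lam1 lam2 : ℝ) (hlam1 : lam1 = ((P : ℝ) + Real.sqrt D) / 2)
    (hlam2 : lam2 = ((P : ℝ) - Real.sqrt D) / 2)
    (g h : ℝ → ℂ)
    (hg : ∀ t : ℝ, g t = (lam1 : ℂ) ^ (t : ℂ) + (lam2 : ℂ) ^ (t : ℂ))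
    (hh : ∀ t : ℝ, h t = ((lam1 : ℂ) ^ (t : ℂ) - (lam2 : ℂ) ^ (t : ℂ)) / (Real.sqrt D : ℂ)) :
    ∀ t : ℝ, g t ^ 2 - g (t - 1) * g (t + 1)
        - ((P : ℂ) ^ 2 + 3) * (h (t - 1) * h (t + 1) - h t ^ 2) =
      (-1 : ℂ) ^ (t : ℂ) ∧
      (-1 : ℂ) ^ (t : ℂ) = Complex.exp (Real.pi * t * Complex.I) := by
  intro t
  have hD_pos : 0 < D := by rw [hD]; positivity
  have hsqrt : Real.sqrt D ^ 2 = (P : ℝ) ^ 2 + 4 := by rw [Real.sq_sqrt hD_pos.le, hD]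
  have hmul : lam1 * lam2 = -1 := by rw [hlam1, hlam2]; linear_combination -hsqrt / 4
  have hsum : lam1 + lam2 = P := by rw [hlam1, hlam2]; ring
  -- `λ₁ - λ₂ = √D ≥ 0` and `λ₁ λ₂ < 0`
  have hlam1_pos : 0 < lam1 := by nlinarith [Real.sqrt_nonneg D]
  have hmulC : (lam1 : ℂ) * lam2 = -1 := by exact_mod_cast hmul
  have hsumC : (lam1 : ℂ) + lam2 = P := by exact_mod_cast hsum
  have hsqrtC : (Real.sqrt D : ℂ) ^ 2 = (P : ℂ) ^ 2 + 4 := by exact_mod_cast hsqrt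
  have hsqrt0 : (Real.sqrt D : ℂ) ≠ 0 := ofReal_ne_zero.mpr (Real.sqrt_pos.mpr hD_pos).ne'
  have h1 : (lam1 : ℂ) ≠ 0 := left_ne_zero_of_mul (hmulC ▸ neg_ne_zero.mpr one_ne_zero)
  have h2 : (lam2 : ℂ) ≠ 0 := right_ne_zero_of_mul (hmulC ▸ neg_ne_zero.mpr one_ne_zero)
  refine ⟨?_, neg_one_cpow_eq_exp t⟩
  simp only [hg, hh, ofReal_sub, ofReal_add, ofReal_one, cpow_add_one h1, cpow_add_one h2,
    cpow_sub_one h1, cpow_sub_one h2]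
  rw [cassini_helix_identity hmulC hsumC hsqrtC hsqrt0, ← ofReal_mul_cpow_of_pos_s18 hlam1_pos,
    hmulC]

/-- `g(t)² − g(t−1)·g(t+1) − (P²+3)·(h(t−1)·h(t+1) − h(t)²) = (−1)^t`, where
`(−1 : ℂ)^t = exp(iπt)`; hence this map is representable as a helix of ratio 1 and pitch 2. -/
theorem psi4_helix (P : ℤ) (hP : 1 ≤ P) (D : ℝ) (hD : D = (P : ℝ) ^ 2 + 4)
    (lam1 lam2 : ℝ) (hlam1 : lam1 = ((P : ℝ) + Real.sqrt D) / 2)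
    (hlam2 : lam2 = ((P : ℝ) - Real.sqrt D) / 2)
    (g h : ℝ → ℂ)
    (hg : ∀ t : ℝ, g t = (lam1 : ℂ) ^ (t : ℂ) + (lam2 : ℂ) ^ (t : ℂ))
    (hh : ∀ t : ℝ, h t = ((lam1 : ℂ) ^ (t : ℂ) - (lam2 : ℂ) ^ (t : ℂ)) / (Real.sqrt D : ℂ)) :
    ∀ t : ℝ, g t ^ 2 - g (t - 1) * g (t + 1)
        - ((P : ℂ) ^ 2 + 3) * (h (t - 1) * h (t + 1) - h t ^ 2) =
      (-1 : ℂ) ^ (t : ℂ) ∧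
      (-1 : ℂ) ^ (t : ℂ) = Complex.exp (Real.pi * t * Complex.I) :=
  psi4_helix_general P D hD lam1 lam2 hlam1 hlam2 g h hg hh
end
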